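/- Let (T, Σ, ν) be a measure space with ν(T) = 1, (Ω, 𝒜, P) a probability space, and f : T → L²(Ω, P) a Pettis integrable stochastic process with Pettis integral f̄ = ∫ f(t) dν(t). If the function s ↦ ∫ Cov[f(s), f(t)] dν(t) is ν-integrable, then Var[f̄] = ∬ Cov[f(s), f(t)] dν(s) dν(t). -/

import Mathlib

open MeasureTheory

/-- The mean `E[x]` of a square-integrable random variable. -/
noncomputable def meanL2 {Ω : Type*} [MeasurableSpace Ω] (P : Measure Ω)
    (x : Lp ℝ 2 P) : ℝ := ∫ ω, x ω ∂P

/-- The covariance `Cov[x, y] = E[xy] − E[x]·E[y]` of square-integrable random variables. -/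
noncomputable def covL2 {Ω : Type*} [MeasurableSpace Ω] (P : Measure Ω)
    (x y : Lp ℝ 2 P) : ℝ := (inner ℝ x y : ℝ) - meanL2 P x * meanL2 P y

/-- `xbar` is the Pettis integral of the process `f : T → L²(Ω, P)`:
`f` is weakly measurable and `⟪x, xbar⟫ = ∫ ⟪x, f t⟫ dν` for every `x`. -/
def IsPettisIntegral {T : Type*} [MeasurableSpace T] (ν : Measure T)
    {Ω : Type*} [MeasurableSpace Ω] {P : Measure Ω}
    (f : T → Lp ℝ 2 P) (xbar : Lp ℝ 2 P) : Prop :=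
  (∀ x : Lp ℝ 2 P, NullMeasurable (fun t => (inner ℝ x (f t) : ℝ)) ν) ∧
  (∀ x : Lp ℝ 2 P, (inner ℝ x xbar : ℝ) = ∫ t, (inner ℝ x (f t) : ℝ) ∂ν)


noncomputable def oneL2 {Ω : Type*} [MeasurableSpace Ω] (P : Measure Ω)
    [IsProbabilityMeasure P] : Lp ℝ 2 P :=
  (memLp_const (1:ℝ) : MemLp _ 2 P).toLp _

lemma inner_oneL2 {Ω : Type*} [MeasurableSpace Ω] (P : Measure Ω) [IsProbabilityMeasure P]
    (x : Lp ℝ 2 P) : (inner ℝ (oneL2 P) x : ℝ) = meanL2 P x := by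
  rw [MeasureTheory.L2.inner_def, meanL2]
  refine integral_congr_ae ?_
  filter_upwards [(memLp_const (1:ℝ) : MemLp _ 2 P).coeFn_toLp] with ω hω
  simp [oneL2, hω, RCLike.inner_apply]

lemma meanL2_oneL2 {Ω : Type*} [MeasurableSpace Ω] (P : Measure Ω) [IsProbabilityMeasure P] :
    meanL2 P (oneL2 P) = 1 := by
  rw [meanL2, oneL2]
  rw [integral_congr_ae (memLp_const (1:ℝ) : MemLp _ 2 P).coeFn_toLp]
  simp

/-- The centering operator `x ↦ x - E[x]·1`. -/
noncomputable def ctrL2 {Ω : Type*} [MeasurableSpace Ω] (P : Measure Ω)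
    [IsProbabilityMeasure P] (x : Lp ℝ 2 P) : Lp ℝ 2 P :=
  x - meanL2 P x • oneL2 P

lemma inner_ctrL2 {Ω : Type*} [MeasurableSpace Ω] (P : Measure Ω) [IsProbabilityMeasure P]
    (x y : Lp ℝ 2 P) :
    (inner ℝ x (ctrL2 P y) : ℝ) = inner ℝ x y - meanL2 P x * meanL2 P y := by
  rw [ctrL2, inner_sub_right, real_inner_smul_right, real_inner_comm (oneL2 P) x,
    inner_oneL2]
  ring

lemma ctrL2_inner {Ω : Type*} [MeasurableSpace Ω] (P : Measure Ω) [IsProbabilityMeasure P]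
    (x y : Lp ℝ 2 P) :
    (inner ℝ (ctrL2 P x) y : ℝ) = inner ℝ x y - meanL2 P x * meanL2 P y := by
  rw [real_inner_comm, inner_ctrL2, real_inner_comm]; ring

lemma meanL2_ctrL2 {Ω : Type*} [MeasurableSpace Ω] (P : Measure Ω) [IsProbabilityMeasure P]
    (x : Lp ℝ 2 P) : meanL2 P (ctrL2 P x) = 0 := by
  rw [← inner_oneL2, inner_ctrL2, inner_oneL2, meanL2_oneL2]; ring

lemma covL2_eq_inner_ctr {Ω : Type*} [MeasurableSpace Ω] (P : Measure Ω)
    [IsProbabilityMeasure P] (x y : Lp ℝ 2 P) :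
    covL2 P x y = (inner ℝ (ctrL2 P x) (ctrL2 P y) : ℝ) := by
  rw [covL2, ctrL2_inner, inner_ctrL2, meanL2_ctrL2]; ring

lemma inner_ctr_eq_ctr_inner {Ω : Type*} [MeasurableSpace Ω] (P : Measure Ω)
    [IsProbabilityMeasure P] (x y : Lp ℝ 2 P) :
    (inner ℝ (ctrL2 P x) (ctrL2 P y) : ℝ) = inner ℝ (ctrL2 P x) y := by
  rw [inner_ctrL2, meanL2_ctrL2, ctrL2_inner]; ring

/-- Let `f : T → L²(Ω, P)` be a Pettis integrable stochastic process with
Pettis integral `f̄ = ∫ f dν`.  If `s ↦ ∫ Cov[f s, f t] dν t` is `ν`-integrable, then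
`Var[f̄] = ∬ Cov[f s, f t] dν s dν t`. -/
theorem var_pettisIntegral
    {T : Type*} [MeasurableSpace T] (ν : Measure T) [IsProbabilityMeasure ν]
    {Ω : Type*} [MeasurableSpace Ω] (P : Measure Ω) [IsProbabilityMeasure P]
    (f : T → Lp ℝ 2 P) (fbar : Lp ℝ 2 P)
    (hf : IsPettisIntegral ν f fbar)
    (hint : Integrable (fun s => ∫ t, covL2 P (f s) (f t) ∂ν) ν) :
    covL2 P fbar fbar = ∫ s, ∫ t, covL2 P (f s) (f t) ∂ν ∂ν := by
  have key : ∀ x : Lp ℝ 2 P,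
      (inner ℝ (ctrL2 P x) (ctrL2 P fbar) : ℝ) = ∫ t, covL2 P x (f t) ∂ν := by
    intro x
    rw [inner_ctr_eq_ctr_inner, hf.2]
    refine integral_congr_ae (Filter.Eventually.of_forall fun t => ?_)
    show (inner ℝ (ctrL2 P x) (f t) : ℝ) = covL2 P x (f t)
    rw [covL2_eq_inner_ctr, inner_ctr_eq_ctr_inner, ctrL2_inner]
  have step : ∀ t, covL2 P fbar (f t) = ∫ s, covL2 P (f t) (f s) ∂ν := by
    intro t
    rw [covL2_eq_inner_ctr, real_inner_comm, key]
  calc covL2 P fbar fbar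
      = (inner ℝ (ctrL2 P fbar) (ctrL2 P fbar) : ℝ) := covL2_eq_inner_ctr P fbar fbar
    _ = ∫ t, covL2 P fbar (f t) ∂ν := key fbar
    _ = ∫ t, ∫ s, covL2 P (f t) (f s) ∂ν ∂ν :=
        integral_congr_ae (Filter.Eventually.of_forall fun t => step t)
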